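/- arXiv:1401.5543 — 2 statements merged into one kernel-verified Lean document; each statement's English description precedes it below -/
import Mathlib

section
/- (New analytical bound) Let (Ω, P) be a probability space and let A_1, …, A_N be measurable events (N ≥ 2) with P(A_i) > 0 for every i. Let δ = max(0, max_{1≤i≤N} (γ_i − (N−1)α_i)), and assume δ < α_i for every i. Set α_i' = α_i − δ and γ_i' = γ_i − N·δ. Then P(⋃_{i=1}^N A_i) ≥ δ + Σ_{i=1}^N [ 1/χ(γ_i'/α_i') − (γ_i'/α_i' − χ(γ_i'/α_i')) / ((1 + χ(γ_i'/α_i'))·χ(γ_i'/α_i')) ] · α_i'. -/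
/-!
Let `c ω` be the number of events containing `ω`. Then `P(⋃ Aᵢ) = ∑ᵢ ∫_{Aᵢ} 1/c`, while
`αᵢ = ∫_{Aᵢ} 1` and `γᵢ = ∫_{Aᵢ} c`. Since `c` is a positive integer on `Aᵢ` and no integer lies
strictly between `m` and `m + 1`, the secant of `x ↦ 1/x` through `m` and `m + 1` stays below `1/c`
for every integer `m`; integrating it over `Aᵢ` bounds `∫_{Aᵢ} 1/c` from below by an affine function
of `(αᵢ, γᵢ)`, and `χ(γ'ᵢ/α'ᵢ)` is just one choice of `m`. On `⋂ Aⱼ`, where `c = N`, we keep the gap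
between `1/N` and the secant: as `c ≤ N - 1 + 1_{⋂ Aⱼ}`, every `γᵢ - (N - 1)αᵢ` is at most
`P(⋂ Aⱼ)`, so this region carries mass at least `δ`, and accounting for it replaces `(αᵢ, γᵢ)` by
`(α'ᵢ, γ'ᵢ)` at the price of the extra `δ / N` per event.
-/

open MeasureTheory

open Classical in
/-- `χ(x) = x − 1` if `x` is an integer with `x ≥ 2`, and `χ(x) = ⌊x⌋` otherwise. -/
noncomputable def chi (x : ℝ) : ℝ :=
  if (∃ n : ℤ, x = (n : ℝ)) ∧ 2 ≤ x then x - 1 else (⌊x⌋ : ℝ)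

lemma chi_eq_intCast (x : ℝ) : ∃ m : ℤ, chi x = m := by
  unfold chi
  split_ifs with h
  · obtain ⟨⟨n, rfl⟩, -⟩ := h
    exact ⟨n - 1, by push_cast; ring⟩
  · exact ⟨⌊x⌋, rfl⟩

/-- The secant of `x ↦ 1 / x` through `m` and `m + 1`. -/
noncomputable def invSecant (m x : ℝ) : ℝ := 1 / m - (x - m) / ((1 + m) * m)

lemma invSecant_eq_sub_div (m x : ℝ) : invSecant m x = invSecant m 0 - x / ((1 + m) * m) := by
  unfold invSecant; ring

lemma invSecant_div_mul (m g : ℝ) {a : ℝ} (ha : a ≠ 0) :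
    invSecant m (g / a) * a = a * invSecant m 0 - g / ((1 + m) * m) := by
  rw [invSecant_eq_sub_div]; field_simp

lemma invSecant_intCast_le_inv (m k : ℤ) (hk : 0 < k) : invSecant m k ≤ (k : ℝ)⁻¹ := by
  have hk' : (0 : ℝ) < k := by exact_mod_cast hk
  have hden : (0 : ℤ) ≤ (1 + m) * m := by rcases le_or_gt 0 m with h | h <;> nlinarith
  rcases hden.eq_or_lt with hden | hden
  -- `m ∈ {0, -1}`: the division by zero leaves `invSecant m k = 1 / m ≤ 0`
  · have hm : m ≤ 0 := by nlinarith
    have hden' : (1 + (m : ℝ)) * m = 0 := by exact_mod_cast hden.symm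
    have hm' : (m : ℝ)⁻¹ ≤ 0 := inv_nonpos.mpr (by exact_mod_cast hm)
    simp only [invSecant, hden', div_zero, sub_zero, one_div]
    linarith [inv_pos.mpr hk']
  · have hden' : (0 : ℝ) < (1 + m) * m := by exact_mod_cast hden
    -- no integer lies strictly between `m` and `m + 1`
    have hgap : (0 : ℝ) ≤ (k - m) * (k - m - 1) := by
      have : (0 : ℤ) ≤ (k - m) * (k - m - 1) := by
        rcases le_or_gt k m with h | h <;> nlinarith
      exact_mod_cast this
    have hm : (m : ℝ) ≠ 0 := by rintro h; simp [h] at hden'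
    have h1 : (1 + (m : ℝ)) ≠ 0 := by rintro h; simp [h] at hden'
    have : invSecant m k = (2 * m + 1 - k) / ((1 + m) * m) := by
      unfold invSecant; field_simp; ring
    rw [this, div_le_iff₀ hden', ← div_eq_inv_mul, le_div_iff₀ hk']
    nlinarith

section coverCount

variable {Ω ι : Type*} [Fintype ι]

noncomputable def coverCount (A : ι → Set Ω) (ω : Ω) : ℝ := ∑ j, (A j).indicator 1 ω

lemma coverCount_eq_card (A : ι → Set Ω) (ω : Ω) [DecidablePred (ω ∈ A ·)] :
    coverCount A ω = (Finset.univ.filter (ω ∈ A ·)).card := by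
  simp only [coverCount, Set.indicator_apply, Pi.one_apply, Finset.sum_boole]

lemma one_le_coverCount {A : ι → Set Ω} {ω : Ω} {i : ι} (h : ω ∈ A i) : 1 ≤ coverCount A ω := by
  classical
  rw [coverCount_eq_card, Nat.one_le_cast, Nat.one_le_iff_ne_zero, Finset.card_ne_zero]
  exact ⟨i, by simpa using h⟩

lemma coverCount_of_mem_iInter {A : ι → Set Ω} {ω : Ω} (h : ω ∈ ⋂ j, A j) :
    coverCount A ω = Fintype.card ι := by
  classical
  rw [coverCount_eq_card, Finset.filter_true_of_mem fun j _ => Set.mem_iInter.mp h j]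
  rfl

lemma coverCount_le_of_notMem_iInter {A : ι → Set Ω} {ω : Ω} (h : ω ∉ ⋂ j, A j) :
    coverCount A ω ≤ Fintype.card ι - 1 := by
  classical
  obtain ⟨j, hj⟩ : ∃ j, ω ∉ A j := by simpa using h
  have : (Finset.univ.filter (ω ∈ A ·)).card < Fintype.card ι :=
    Finset.card_lt_univ_of_notMem (x := j) (by simpa using hj)
  rw [coverCount_eq_card, le_sub_iff_add_le]
  exact_mod_cast this

lemma coverCount_le_card_sub_one_add_indicator (A : ι → Set Ω) (ω : Ω) :
    coverCount A ω ≤ Fintype.card ι - 1 + (⋂ j, A j).indicator 1 ω := by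
  by_cases h : ω ∈ ⋂ j, A j
  · simp [coverCount_of_mem_iInter h, h]
  · simpa [h] using coverCount_le_of_notMem_iInter h

lemma coverCount_mul_inv (A : ι → Set Ω) (ω : Ω) :
    coverCount A ω * (coverCount A ω)⁻¹ = (⋃ j, A j).indicator 1 ω := by
  by_cases h : ω ∈ ⋃ j, A j
  · obtain ⟨i, hi⟩ := Set.mem_iUnion.mp h
    rw [Set.indicator_of_mem h, mul_inv_cancel₀ (by linarith [one_le_coverCount hi]), Pi.one_apply]
  · have : ∀ j, ω ∉ A j := by simpa using h
    simp [coverCount, this, h]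

lemma invSecant_coverCount_le_inv (m : ℤ) {A : ι → Set Ω} {ω : Ω} {i : ι} (h : ω ∈ A i) :
    invSecant m (coverCount A ω) ≤ (coverCount A ω)⁻¹ := by
  classical
  have hpos := one_le_coverCount h
  rw [coverCount_eq_card] at hpos ⊢
  exact_mod_cast invSecant_intCast_le_inv m _ (by exact_mod_cast hpos)

variable [MeasurableSpace Ω] {A : ι → Set Ω}

lemma measurable_coverCount (hA : ∀ i, MeasurableSet (A i)) : Measurable (coverCount A) := by
  unfold coverCount
  exact Finset.measurable_sum _ fun j _ => measurable_const.indicator (hA j)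

variable (μ : Measure Ω) [IsFiniteMeasure μ]

lemma integrable_coverCount (hA : ∀ i, MeasurableSet (A i)) : Integrable (coverCount A) μ := by
  unfold coverCount
  exact integrable_finsetSum _ fun j _ => (integrable_const 1).indicator (hA j)

lemma integrable_inv_coverCount (hA : ∀ i, MeasurableSet (A i)) :
    Integrable (fun ω => (coverCount A ω)⁻¹) μ := by
  refine .of_bound (measurable_coverCount hA).inv.aestronglyMeasurable 1 (.of_forall fun ω => ?_)
  classical
  simp [coverCount_eq_card, Nat.cast_inv_le_one]

lemma setIntegral_coverCount (hA : ∀ i, MeasurableSet (A i)) (i : ι) :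
    ∫ ω in A i, coverCount A ω ∂μ = ∑ j, μ.real (A i ∩ A j) := by
  unfold coverCount
  rw [integral_finsetSum _ fun j _ =>
    ((integrable_const 1).indicator (hA j)).restrict (f := (A j).indicator 1)]
  congr 1 with j
  rw [setIntegral_indicator (hA j)]
  simp

lemma measureReal_iUnion_eq_sum_setIntegral (hA : ∀ i, MeasurableSet (A i)) :
    μ.real (⋃ i, A i) = ∑ i, ∫ ω in A i, (coverCount A ω)⁻¹ ∂μ := by
  have hsum : (⋃ i, A i).indicator 1
      = fun ω => ∑ i, (A i).indicator (fun ω => (coverCount A ω)⁻¹) ω := by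
    ext ω
    rw [← coverCount_mul_inv]
    simp only [coverCount, Finset.sum_mul]
    congr 1 with i
    by_cases h : ω ∈ A i <;> simp [h]
  rw [← integral_indicator_one (MeasurableSet.iUnion hA), hsum,
    integral_finsetSum _ fun i _ => (integrable_inv_coverCount μ hA).indicator (hA i)]
  simp_rw [integral_indicator (hA _)]

lemma sum_measureReal_inter_sub_le (hA : ∀ i, MeasurableSet (A i)) (i : ι) :
    ∑ j, μ.real (A i ∩ A j) - (Fintype.card ι - 1) * μ.real (A i) ≤ μ.real (⋂ j, A j) := by
  have hB : MeasurableSet (⋂ j, A j) := .iInter hA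
  calc ∑ j, μ.real (A i ∩ A j) - (Fintype.card ι - 1) * μ.real (A i)
      = ∫ ω in A i, (coverCount A ω - (Fintype.card ι - 1)) ∂μ := by
        rw [integral_sub (integrable_coverCount μ hA).restrict (integrable_const _),
          setIntegral_coverCount μ hA, setIntegral_const, smul_eq_mul, mul_comm]
    _ ≤ ∫ ω in A i, (⋂ j, A j).indicator 1 ω ∂μ := by
        refine setIntegral_mono_on ((integrable_coverCount μ hA).sub (integrable_const _)).restrict
          ((integrable_const 1).indicator hB).restrict (hA i) fun ω _ => ?_
        linarith [coverCount_le_card_sub_one_add_indicator A ω]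
    _ ≤ μ.real (⋂ j, A j) := by
        rw [setIntegral_indicator hB]
        simpa using measureReal_mono Set.inter_subset_right

lemma invSecant_add_le_setIntegral_inv_coverCount (hA : ∀ i, MeasurableSet (A i)) (m : ℤ)
    {δ : ℝ} (hδ : δ ≤ μ.real (⋂ j, A j)) (i : ι) :
    (μ.real (A i) - δ) * invSecant m 0
      - (∑ j, μ.real (A i ∩ A j) - Fintype.card ι * δ) / ((1 + m) * m) + δ / Fintype.card ι
      ≤ ∫ ω in A i, (coverCount A ω)⁻¹ ∂μ := by
  set B := ⋂ j, A j
  have hB : MeasurableSet B := .iInter hA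
  set n := Fintype.card ι
  have hn : 0 < n := Fintype.card_pos_iff.mpr ⟨i⟩
  obtain ⟨K, hK⟩ : ∃ K, K = (n : ℝ)⁻¹ - invSecant m n := ⟨_, rfl⟩
  have hK0 : 0 ≤ K :=
    hK ▸ sub_nonneg.mpr (by exact_mod_cast invSecant_intCast_le_inv m n (by omega))
  have hpoint : ∀ ω ∈ A i, invSecant m (coverCount A ω) + B.indicator (fun _ => K) ω
      ≤ (coverCount A ω)⁻¹ := by
    intro ω hω
    by_cases hωB : ω ∈ B
    · simp [hωB, hK, n, coverCount_of_mem_iInter hωB]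
    · simpa [hωB] using invSecant_coverCount_le_inv m hω
  have hsec : Integrable (fun ω => invSecant m (coverCount A ω)) μ := by
    simp_rw [invSecant_eq_sub_div m (coverCount A _)]
    exact (integrable_const _).sub ((integrable_coverCount μ hA).div_const _)
  have hind : Integrable (B.indicator fun _ => K) μ := (integrable_const K).indicator hB
  have hlower : ∫ ω in A i, (invSecant m (coverCount A ω) + B.indicator (fun _ => K) ω) ∂μ
      = μ.real (A i) * invSecant m 0 - (∑ j, μ.real (A i ∩ A j)) / ((1 + m) * m)
        + μ.real B * K := by
    rw [integral_add hsec.restrict hind.restrict, setIntegral_indicator hB, setIntegral_const,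
      Set.inter_eq_self_of_subset_right (Set.iInter_subset A i)]
    simp_rw [invSecant_eq_sub_div m (coverCount A _)]
    rw [integral_sub (integrable_const _) ((integrable_coverCount μ hA).div_const _).restrict,
      integral_div, setIntegral_coverCount μ hA, setIntegral_const, smul_eq_mul, smul_eq_mul]
  calc _ ≤ μ.real (A i) * invSecant m 0 - (∑ j, μ.real (A i ∩ A j)) / ((1 + m) * m)
        + μ.real B * K := by
        have := mul_le_mul_of_nonneg_right hδ hK0
        rw [hK, invSecant_eq_sub_div m n] at this ⊢
        linear_combination this
    _ = _ := hlower.symm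
    _ ≤ _ := setIntegral_mono_on (hsec.add hind).restrict
          (integrable_inv_coverCount μ hA).restrict (hA i) hpoint

end coverCount

/-- The new analytical (YAT) lower bound on the probability of a union. -/
theorem yat_bound {Ω : Type*} [MeasurableSpace Ω] (P : Measure Ω)
    [IsProbabilityMeasure P] (N : ℕ) (hN : 2 ≤ N)
    (A : Fin N → Set Ω) (hA : ∀ i, MeasurableSet (A i))
    (α γ : Fin N → ℝ)
    (hα : ∀ i, α i = (P (A i)).toReal)
    (hγ : ∀ i, γ i = ∑ j : Fin N, (P (A i ∩ A j)).toReal)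
    (δ : ℝ)
    (hδ : δ = max 0 (Finset.univ.sup' (Finset.univ_nonempty_iff.mpr ⟨⟨0, by omega⟩⟩)
        (fun i => γ i - ((N : ℝ) - 1) * α i)))
    (hδα : ∀ i, δ < α i)
    (α' γ' : Fin N → ℝ)
    (hα' : ∀ i, α' i = α i - δ) (hγ' : ∀ i, γ' i = γ i - (N : ℝ) * δ) :
    (P (⋃ i, A i)).toReal ≥ δ +
      ∑ i : Fin N, (1 / chi (γ' i / α' i) -
        (γ' i / α' i - chi (γ' i / α' i)) /
          ((1 + chi (γ' i / α' i)) * chi (γ' i / α' i))) * α' i := by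
  have hδB : δ ≤ P.real (⋂ j, A j) := by
    rw [hδ]
    refine max_le measureReal_nonneg (Finset.sup'_le _ _ fun i _ => ?_)
    simpa [hα, hγ, ← measureReal_def] using sum_measureReal_inter_sub_le P hA i
  have hterm : ∀ i, invSecant (chi (γ' i / α' i)) (γ' i / α' i) * α' i + δ / N
      ≤ ∫ ω in A i, (coverCount A ω)⁻¹ ∂P := by
    intro i
    obtain ⟨m, hm⟩ := chi_eq_intCast (γ' i / α' i)
    have hα'0 : α' i ≠ 0 := by rw [hα' i]; linarith [hδα i]
    rw [hm, invSecant_div_mul _ _ hα'0, hα' i, hγ' i, hα i, hγ i]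
    simp_rw [← measureReal_def]
    simpa only [Fintype.card_fin] using invSecant_add_le_setIntegral_inv_coverCount P hA m hδB i
  rw [ge_iff_le, ← measureReal_def, measureReal_iUnion_eq_sum_setIntegral P hA]
  calc δ + ∑ i, invSecant (chi (γ' i / α' i)) (γ' i / α' i) * α' i
      = ∑ i, (invSecant (chi (γ' i / α' i)) (γ' i / α' i) * α' i + δ / N) := by
        rw [Finset.sum_add_distrib, Finset.sum_const, Finset.card_univ, Fintype.card_fin,
          nsmul_eq_mul, mul_div_cancel₀ _ (by positivity)]
        ring
    _ ≤ _ := Finset.sum_le_sum fun i _ => hterm i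
end

section
/- Let N ≥ 2 and let α, γ be real numbers with α > 0 and α ≤ γ < N·α. Define f : ℝ → ℝ by f(x) = ((2·χ(t(x)) + 1)/(χ(t(x))·(χ(t(x)) + 1)))·(α − x) − (1/(χ(t(x))·(χ(t(x)) + 1)))·(γ − N·x) + x/N, where t(x) = (γ − N·x)/(α − x). Then f is continuous and monotone nondecreasing on the interval [max(0, γ − (N−1)·α), (γ − α)/(N−1)]. -/
/-!
Write `s = t(x)`, so that `γ − N x = s (α − x)`. Then `f(x) = c_k(s) (α − x) + x / N` with
`k = χ(s)`, where `c_k` is the chord of the convex function `s ↦ 1 / s` between `k` and `k + 1`.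
Since `k ≤ s ≤ k + 1`, the chord `c_k` lies above `1 / s` at `s`, while every other chord `c_j`,
`j ∈ ℤ`, lies below it. Hence on the interval, where `x < α` and `1 ≤ s ≤ N − 1`, `f` is the
maximum of the affine functions `x ↦ c_j(t(x)) (α − x) + x / N`, `1 ≤ j ≤ N − 1`, and each of
these has slope `(N − j)(N − j − 1) / (j (j + 1) N) ≥ 0`.
-/

noncomputable def invChord (k s : ℝ) : ℝ := (2 * k + 1 - s) / (k * (k + 1))

lemma invChord_sub_inv {k s : ℝ} (hk : 0 < k) (hs : 0 < s) :
    invChord k s - 1 / s = -((s - k) * (s - (k + 1))) / (k * (k + 1) * s) := by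
  unfold invChord
  field_simp
  ring

lemma inv_le_invChord {k s : ℝ} (hk : 0 < k) (hks : k ≤ s) (hsk : s ≤ k + 1) :
    1 / s ≤ invChord k s := by
  have hs : 0 < s := hk.trans_le hks
  have h : 0 ≤ -((s - k) * (s - (k + 1))) / (k * (k + 1) * s) :=
    div_nonneg (by nlinarith) (by positivity)
  linarith [invChord_sub_inv hk hs]

lemma invChord_le_inv {k s : ℝ} (hk : 0 < k) (hs : 0 < s) (h : s ≤ k ∨ k + 1 ≤ s) :
    invChord k s ≤ 1 / s := by
  have hprod : 0 ≤ (s - k) * (s - (k + 1)) := by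
    rcases h with h | h
    · exact mul_nonneg_of_nonpos_of_nonpos (by linarith) (by linarith)
    · exact mul_nonneg (by linarith) (by linarith)
  have h : -((s - k) * (s - (k + 1))) / (k * (k + 1) * s) ≤ 0 :=
    div_nonpos_of_nonpos_of_nonneg (by linarith) (by positivity)
  linarith [invChord_sub_inv hk hs]

lemma invChord_le_invChord {k m : ℤ} (hk : 0 < k) (hm : 0 < m) {s : ℝ}
    (hms : (m : ℝ) ≤ s) (hsm : s ≤ m + 1) : invChord k s ≤ invChord m s := by
  have hk' : (0 : ℝ) < k := Int.cast_pos.mpr hk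
  have hm' : (0 : ℝ) < m := Int.cast_pos.mpr hm
  rcases lt_trichotomy k m with hkm | rfl | hkm
  · have : (k : ℝ) + 1 ≤ m := by exact_mod_cast hkm
    exact (invChord_le_inv hk' (by linarith) (Or.inr (by linarith))).trans
      (inv_le_invChord hm' hms hsm)
  · exact le_rfl
  · have : (m : ℝ) + 1 ≤ k := by exact_mod_cast hkm
    exact (invChord_le_inv hk' (by linarith) (Or.inl (by linarith))).trans
      (inv_le_invChord hm' hms hsm)

lemma exists_int_chi_eq {s : ℝ} (hs : 1 ≤ s) :
    ∃ m : ℤ, 0 < m ∧ chi s = m ∧ (m : ℝ) ≤ s ∧ s ≤ m + 1 := by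
  unfold chi
  split_ifs with h
  · obtain ⟨⟨n, rfl⟩, hn⟩ := h
    have hn' : (2 : ℤ) ≤ n := by exact_mod_cast hn
    exact ⟨n - 1, by omega, by push_cast; ring, by push_cast; linarith, by push_cast; linarith⟩
  · exact ⟨⌊s⌋, Int.floor_pos.mpr hs, rfl, Int.floor_le s, (Int.lt_floor_add_one s).le⟩

noncomputable def fPiece (N : ℕ) (α γ k x : ℝ) : ℝ :=
  ((2 * k + 1) / (k * (k + 1))) * (α - x) - (1 / (k * (k + 1))) * (γ - (N : ℝ) * x) + x / (N : ℝ)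

lemma fPiece_eq_invChord {N : ℕ} {α γ k x s : ℝ} (hs : γ - N * x = s * (α - x)) :
    fPiece N α γ k x = invChord k s * (α - x) + x / N := by
  rw [fPiece, hs, invChord]
  ring

lemma fPiece_eq_add_mul (N : ℕ) (α γ : ℝ) {k : ℝ} (hk : 0 < k) (hN : 0 < (N : ℝ)) (x : ℝ) :
    fPiece N α γ k x = fPiece N α γ k 0 + (N - k) * (N - k - 1) / (k * (k + 1) * N) * x := by
  unfold fPiece
  field_simp
  ring

lemma fPiece_monotone (N : ℕ) (α γ : ℝ) {k : ℝ} (hk : 0 < k) (hkN : k + 1 ≤ N) :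
    Monotone (fPiece N α γ k) := by
  have hN : 0 < (N : ℝ) := by linarith
  intro x y hxy
  rw [fPiece_eq_add_mul N α γ hk hN x, fPiece_eq_add_mul N α γ hk hN y]
  have hslope : 0 ≤ (N - k) * (N - k - 1) / (k * (k + 1) * N) :=
    div_nonneg (mul_nonneg (by linarith) (by linarith)) (by positivity)
  gcongr

lemma lt_and_div_mem_Icc {N α γ x : ℝ} (hN : 1 < N) (hγ : γ < N * α)
    (hlo : γ - (N - 1) * α ≤ x) (hhi : x ≤ (γ - α) / (N - 1)) :
    x < α ∧ 1 ≤ (γ - N * x) / (α - x) ∧ (γ - N * x) / (α - x) ≤ N - 1 := by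
  have hhi' : x * (N - 1) ≤ γ - α := (le_div_iff₀ (by linarith)).mp hhi
  have hxα : x < α := by nlinarith
  have hαx : 0 < α - x := by linarith
  exact ⟨hxα, (le_div_iff₀ hαx).mpr (by nlinarith), (div_le_iff₀ hαx).mpr (by nlinarith)⟩

lemma fPiece_chi_eq_sup' (N : ℕ) (α γ : ℝ) {x : ℝ} (hxα : x < α)
    (hs1 : 1 ≤ (γ - N * x) / (α - x)) (hsN : (γ - N * x) / (α - x) ≤ N - 1)
    (hne : (Finset.Icc (1 : ℤ) (N - 1)).Nonempty) :
    fPiece N α γ (chi ((γ - N * x) / (α - x))) x =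
      (Finset.Icc (1 : ℤ) (N - 1)).sup' hne (fun k => fPiece N α γ k x) := by
  set s := (γ - N * x) / (α - x)
  have hαx : 0 < α - x := by linarith
  have hs : γ - N * x = s * (α - x) := (div_mul_cancel₀ _ hαx.ne').symm
  obtain ⟨m, hm, hchi, hms, hsm⟩ := exists_int_chi_eq hs1
  have hmN : m ≤ N - 1 := by
    have : (m : ℝ) ≤ ((N - 1 : ℤ) : ℝ) := by push_cast; linarith
    exact_mod_cast this
  rw [hchi]
  refine le_antisymm (Finset.le_sup' (fun k : ℤ => fPiece N α γ k x)
    (Finset.mem_Icc.mpr ⟨hm, hmN⟩)) (Finset.sup'_le _ _ fun k hk => ?_)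
  have hk : 0 < k := (Finset.mem_Icc.mp hk).1
  rw [fPiece_eq_invChord hs, fPiece_eq_invChord hs]
  gcongr
  exact invChord_le_invChord hk hm hms hsm

theorem f_continuous_monotone_general (N : ℕ) (hN : 2 ≤ N) (α γ : ℝ)
    (h2 : γ < (N : ℝ) * α)
    (t f : ℝ → ℝ)
    (ht : ∀ x, t x = (γ - (N : ℝ) * x) / (α - x))
    (hf : ∀ x, f x = ((2 * chi (t x) + 1) / (chi (t x) * (chi (t x) + 1))) * (α - x)
        - (1 / (chi (t x) * (chi (t x) + 1))) * (γ - (N : ℝ) * x) + x / (N : ℝ)) :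
    ContinuousOn f (Set.Icc (max 0 (γ - ((N : ℝ) - 1) * α)) ((γ - α) / ((N : ℝ) - 1))) ∧
    MonotoneOn f (Set.Icc (max 0 (γ - ((N : ℝ) - 1) * α)) ((γ - α) / ((N : ℝ) - 1))) := by
  have hN' : (1 : ℝ) < N := by exact_mod_cast hN
  have hne : (Finset.Icc (1 : ℤ) (N - 1)).Nonempty := Finset.nonempty_Icc.mpr (by omega)
  set g : ℝ → ℝ := fun x => (Finset.Icc (1 : ℤ) (N - 1)).sup' hne (fun k => fPiece N α γ k x)
  have hfg : Set.EqOn f g (Set.Icc (max 0 (γ - ((N : ℝ) - 1) * α)) ((γ - α) / ((N : ℝ) - 1))) := by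
    rintro x ⟨hlo, hhi⟩
    obtain ⟨hxα, hs1, hsN⟩ := lt_and_div_mem_Icc hN' h2 ((le_max_right _ _).trans hlo) hhi
    rw [hf, ht]
    exact fPiece_chi_eq_sup' N α γ hxα hs1 hsN hne
  have hg_cont : Continuous g :=
    Continuous.finset_sup'_apply hne fun k _ => by unfold fPiece; fun_prop
  have hg_mono : Monotone g := fun x y hxy => Finset.sup'_le _ _ fun k hk => by
    obtain ⟨hk1, hkN⟩ := Finset.mem_Icc.mp hk
    have hkN' : (k : ℝ) + 1 ≤ N := by exact_mod_cast (by omega : k + 1 ≤ N)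
    exact Finset.le_sup'_of_le _ hk (fPiece_monotone N α γ (Int.cast_pos.mpr hk1) hkN' hxy)
  exact ⟨hg_cont.continuousOn.congr hfg, (hg_mono.monotoneOn _).congr hfg.symm⟩

/-- The function `f i` of the proof of Theorem 2 is continuous and nondecreasing on
the interval `[max(0, γ − (N−1)α), (γ − α)/(N−1)]`. -/
theorem f_continuous_monotone (N : ℕ) (hN : 2 ≤ N) (α γ : ℝ)
    (hα : 0 < α) (h1 : α ≤ γ) (h2 : γ < (N : ℝ) * α)
    (t f : ℝ → ℝ)
    (ht : ∀ x, t x = (γ - (N : ℝ) * x) / (α - x))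
    (hf : ∀ x, f x = ((2 * chi (t x) + 1) / (chi (t x) * (chi (t x) + 1))) * (α - x)
        - (1 / (chi (t x) * (chi (t x) + 1))) * (γ - (N : ℝ) * x) + x / (N : ℝ)) :
    ContinuousOn f (Set.Icc (max 0 (γ - ((N : ℝ) - 1) * α)) ((γ - α) / ((N : ℝ) - 1))) ∧
    MonotoneOn f (Set.Icc (max 0 (γ - ((N : ℝ) - 1) * α)) ((γ - α) / ((N : ℝ) - 1))) :=
  f_continuous_monotone_general N hN α γ h2 t f ht hf
end
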